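/- arXiv:2311.12748 — 5 statements merged into one kernel-verified Lean document; each statement's English description precedes it below -/
import Mathlib

section
/- Let X = ℝⁿ with the Euclidean distance and Lebesgue measure μ, let 0 ≤ α < n, and let E ⊂ ℝⁿ be nonempty. Assume E is porous and the function y ↦ dist(y,E)^{-α} is locally integrable. If for every ε > 0 there exists δ > 0 such that (1/μ(B(z,R))) ∫_{B(z,R)} 1_K(y) dist(y,E)^{-α} dy ≤ ε R^{-α} whenever z ∈ E, R > 0, and K ⊂ ℝⁿ is Lebesgue measurable with μ(K ∩ B(z,R)) ≤ δ μ(B(z,R)), then E satisfies the lower Aikawa condition with exponent α. -/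
/-!
Split the average of `dist(·,E)^{-α}` over `B(z,R)` at the closed `κR`-neighbourhood `K` of `E`.
Off `K` the integrand is at most `(κR)^{-α}`; on `K` the small-sets hypothesis with `ε = 1`
applies once `K` fills at most a `δ`-fraction of the ball, and porosity provides such a `κ`.
Indeed every ball `B(x,ρ)` contains a hole of radius `cρ/2` missing the `cρ/2`-neighbourhood of
`E`. Averaging over all balls of radius `ρ` (Tonelli) then shows that the measure of the
`cρ/2`-neighbourhood inside `B(z,R)` is at most `θ = 1 - (c/2)^d < 1` times that of the
`(1 + c/2)ρ`-neighbourhood inside `B(z,R+ρ)`. Iterating over geometrically shrinking scales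
bounds the density of the `(c/(c+2))^m R`-neighbourhood in `B(z,R)` by `2^d θ^m`.
-/

open Metric MeasureTheory Set
open scoped ENNReal NNReal

noncomputable def diamBound {X : Type*} [PseudoEMetricSpace X] (E : Set X) : ℝ≥0∞ :=
  haveI := Classical.propDecidable
  if EMetric.diam E = 0 then EMetric.diam (Set.univ : Set X) else EMetric.diam E

def lowerAikawaCond {X : Type*} [MetricSpace X] [MeasurableSpace X]
    (μ : Measure X) (E : Set X) (α : ℝ) : Prop :=
  ∃ C : ℝ, 0 < C ∧ ∀ z ∈ E, ∀ R : ℝ, 0 < R → ENNReal.ofReal R < diamBound E →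
    (μ (ball z R))⁻¹ * ∫⁻ y in ball z R, ENNReal.ofReal (infDist y E ^ (-α)) ∂μ ≤
      ENNReal.ofReal (C * R ^ (-α))

def IsPorousSet {X : Type*} [MetricSpace X] (E : Set X) : Prop :=
  ∃ C : ℝ, 0 < C ∧ ∀ (x : X) (r : ℝ), 0 < r → ∃ y : X, ball y (C * r) ⊆ ball x r \ E

open Module

theorem Metric.disjoint_ball_cthickening_of_disjoint_ball {X : Type*} [PseudoMetricSpace X]
    {E : Set X} {y : X} {a b : ℝ} (hb : 0 ≤ b) (h : Disjoint (ball y (a + b)) E) :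
    Disjoint (ball y a) (cthickening b E) := by
  refine Set.disjoint_left.2 fun w hw => ?_
  rw [mem_cthickening_iff, not_le]
  have hwy := mem_ball.1 hw
  have hfar : ENNReal.ofReal (a + b - dist w y) ≤ infEDist w E := by
    refine le_infEDist.2 fun e he => ?_
    have hey : a + b ≤ dist e y := not_lt.1 fun hlt => Set.disjoint_left.1 h (mem_ball.2 hlt) he
    rw [edist_dist]
    exact ENNReal.ofReal_le_ofReal (by linarith [dist_triangle e w y, dist_comm e w])
  exact ((ENNReal.ofReal_lt_ofReal_iff (by linarith)).2 (by linarith)).trans_le hfar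

theorem Metric.lt_infDist_of_notMem_cthickening {X : Type*} [PseudoMetricSpace X] {E : Set X}
    {x : X} {t : ℝ} (hE : E.Nonempty) (h : x ∉ cthickening t E) : t < infDist x E := by
  rw [mem_cthickening_iff, not_le, ← ENNReal.ofReal_toReal (infEDist_ne_top hE)] at h
  exact (ENNReal.ofReal_lt_ofReal_iff'.1 h).1

theorem setLIntegral_sdiff_cthickening_infDist_rpow_le {X : Type*} [PseudoMetricSpace X]
    [MeasurableSpace X] (μ : Measure X) {E : Set X} (hE : E.Nonempty) {α t : ℝ} (hα : 0 ≤ α)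
    (ht : 0 < t) (s : Set X) :
    ∫⁻ y in s \ cthickening t E, ENNReal.ofReal (infDist y E ^ (-α)) ∂μ ≤
      ENNReal.ofReal (t ^ (-α)) * μ s := by
  calc ∫⁻ y in s \ cthickening t E, ENNReal.ofReal (infDist y E ^ (-α)) ∂μ
      ≤ ∫⁻ _ in s \ cthickening t E, ENNReal.ofReal (t ^ (-α)) ∂μ :=
        setLIntegral_mono measurable_const fun y hy => ENNReal.ofReal_le_ofReal <|
          Real.rpow_le_rpow_of_nonpos ht (lt_infDist_of_notMem_cthickening hE hy.2).le
            (neg_nonpos.2 hα)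
    _ ≤ ENNReal.ofReal (t ^ (-α)) * μ s := by
        rw [setLIntegral_const]; gcongr; exact sdiff_subset

def IsPorousWith {X : Type*} [MetricSpace X] (c : ℝ) (E : Set X) : Prop :=
  ∀ (x : X) (r : ℝ), 0 < r → ∃ y : X, ball y (c * r) ⊆ ball x r \ E

section Porous

variable {V : Type*} [NormedAddCommGroup V] [NormedSpace ℝ V] [FiniteDimensional ℝ V]
  [MeasurableSpace V] [BorelSpace V] (μ : Measure V) [μ.IsAddHaarMeasure]

theorem lintegral_measure_inter_ball (A : Set V) (r : ℝ) :
    ∫⁻ x, μ (A ∩ ball x r) ∂μ = μ A * μ (ball 0 r) := by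
  have hball : ∀ x, μ (A ∩ ball x r) = ∫⁻ y, (ball x r).indicator 1 y ∂μ.restrict A := by
    intro x
    rw [lintegral_indicator_one measurableSet_ball, Measure.restrict_apply measurableSet_ball,
      inter_comm]
  have hmeas :
      Measurable (Function.uncurry fun x y : V => (ball x r).indicator (1 : V → ℝ≥0∞) y) :=
    measurable_const.indicator (measurableSet_lt (by fun_prop) measurable_const)
  have hsymm : ∀ x y, (ball x r).indicator (1 : V → ℝ≥0∞) y = (ball y r).indicator 1 x := by
    intro x y
    simp only [indicator, mem_ball, dist_comm, Pi.one_apply]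
  simp_rw [hball]
  rw [lintegral_lintegral_swap hmeas.aemeasurable]
  simp_rw [hsymm, lintegral_indicator_one measurableSet_ball, Measure.addHaar_ball_center μ _ r]
  rw [lintegral_const, Measure.restrict_apply_univ, mul_comm]

variable {c : ℝ} {E : Set V}

theorem IsPorousWith.measure_cthickening_inter_ball_le (hc : 0 < c) (hE : IsPorousWith c E)
    (x : V) {ρ : ℝ} (hρ : 0 < ρ) :
    μ (cthickening (c / 2 * ρ) E ∩ ball x ρ) ≤
      (1 - ENNReal.ofReal ((c / 2) ^ finrank ℝ V)) * μ (ball x ρ) := by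
  obtain ⟨y, hy⟩ := hE x ρ hρ
  have hhole_sub : ball y (c / 2 * ρ) ⊆ ball x ρ :=
    (ball_subset_ball (by linarith [mul_pos hc hρ])).trans (hy.trans sdiff_subset)
  have hhole_disj : Disjoint (ball y (c / 2 * ρ)) (cthickening (c / 2 * ρ) E) := by
    refine disjoint_ball_cthickening_of_disjoint_ball (by positivity) ?_
    rw [← add_mul, add_halves]
    exact disjoint_sdiff_left.mono_left hy
  have hhole : μ (ball y (c / 2 * ρ)) = ENNReal.ofReal ((c / 2) ^ finrank ℝ V) * μ (ball x ρ) := by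
    rw [Measure.addHaar_ball_mul_of_pos μ y (by positivity), Measure.addHaar_ball_center μ x]
  calc μ (cthickening (c / 2 * ρ) E ∩ ball x ρ)
      ≤ μ (ball x ρ \ ball y (c / 2 * ρ)) :=
        measure_mono fun w hw => ⟨hw.2, fun hw' => hhole_disj.ne_of_mem hw' hw.1 rfl⟩
    _ = μ (ball x ρ) - ENNReal.ofReal ((c / 2) ^ finrank ℝ V) * μ (ball x ρ) := by
        rw [measure_sdiff hhole_sub measurableSet_ball.nullMeasurableSet measure_ball_lt_top.ne,
          hhole]
    _ = (1 - ENNReal.ofReal ((c / 2) ^ finrank ℝ V)) * μ (ball x ρ) := by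
        rw [ENNReal.sub_mul fun _ _ => measure_ball_lt_top.ne, one_mul]

theorem IsPorousWith.measure_cthickening_inter_ball_le_mul_cthickening (hc : 0 < c)
    (hE : IsPorousWith c E) (z : V) (R : ℝ) {ρ : ℝ} (hρ : 0 < ρ) :
    μ (cthickening (c / 2 * ρ) E ∩ ball z R) ≤
      (1 - ENNReal.ofReal ((c / 2) ^ finrank ℝ V)) *
        μ (cthickening (ρ + c / 2 * ρ) E ∩ ball z (R + ρ)) := by
  set θ := 1 - ENNReal.ofReal ((c / 2) ^ finrank ℝ V)
  set T := cthickening (c / 2 * ρ) E ∩ ball z R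
  set U := cthickening (ρ + c / 2 * ρ) E ∩ ball z (R + ρ)
  have hsupp : Function.support (fun x => μ (T ∩ ball x ρ)) ⊆ U := by
    intro x hx
    obtain ⟨w, ⟨hwE, hwz⟩, hwx⟩ := nonempty_of_measure_ne_zero hx
    refine ⟨cthickening_cthickening_subset hρ.le (by positivity) E ?_, ?_⟩
    · exact mem_cthickening_of_dist_le x w ρ _ hwE (by rw [dist_comm]; exact (mem_ball.1 hwx).le)
    · rw [mem_ball] at hwz hwx ⊢
      linarith [dist_triangle x w z, dist_comm x w]
  have hlocal : ∀ x, μ (T ∩ ball x ρ) ≤ θ * μ (ball 0 ρ) := fun x =>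
    calc μ (T ∩ ball x ρ) ≤ μ (cthickening (c / 2 * ρ) E ∩ ball x ρ) :=
          measure_mono (inter_subset_inter_left _ inter_subset_left)
      _ ≤ θ * μ (ball x ρ) := hE.measure_cthickening_inter_ball_le μ hc x hρ
      _ = θ * μ (ball 0 ρ) := by rw [Measure.addHaar_ball_center]
  have hρball : μ (ball (0 : V) ρ) ≠ 0 := (measure_ball_pos μ 0 hρ).ne'
  refine (ENNReal.mul_le_mul_iff_left hρball measure_ball_lt_top.ne).1 ?_
  calc μ T * μ (ball 0 ρ) = ∫⁻ x, μ (T ∩ ball x ρ) ∂μ := (lintegral_measure_inter_ball μ T ρ).symm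
    _ = ∫⁻ x in U, μ (T ∩ ball x ρ) ∂μ := (setLIntegral_eq_of_support_subset hsupp).symm
    _ ≤ ∫⁻ _ in U, θ * μ (ball 0 ρ) ∂μ := lintegral_mono hlocal
    _ = θ * μ U * μ (ball 0 ρ) := by rw [setLIntegral_const, mul_right_comm]

theorem IsPorousWith.measure_cthickening_inter_ball_le_pow_mul (hc : 0 < c) (hE : IsPorousWith c E)
    (z : V) (m : ℕ) {r : ℝ} (hr : 0 < r) (R : ℝ) :
    μ (cthickening ((c / (c + 2)) ^ m * r) E ∩ ball z R) ≤
      (1 - ENNReal.ofReal ((c / 2) ^ finrank ℝ V)) ^ m *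
        μ (cthickening r E ∩ ball z (R + r)) := by
  set θ := 1 - ENNReal.ofReal ((c / 2) ^ finrank ℝ V)
  set a := c / (c + 2)
  induction m generalizing r R with
  | zero =>
    rw [pow_zero, one_mul, pow_zero, one_mul]
    exact measure_mono (inter_subset_inter_right _ (ball_subset_ball (by linarith)))
  | succ m ih =>
    -- one step from scale `a * r` to scale `r`, with `ρ = r - a * r`
    have hρ : 0 < 2 * r / (c + 2) := by positivity
    have step := hE.measure_cthickening_inter_ball_le_mul_cthickening μ hc z (R + a * r) hρ
    have e1 : c / 2 * (2 * r / (c + 2)) = a * r := by simp only [a]; field_simp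
    have e2 : 2 * r / (c + 2) + a * r = r := by simp only [a]; field_simp; ring
    have e3 : R + a * r + 2 * r / (c + 2) = R + r := by rw [add_assoc, add_comm (a * r), e2]
    rw [e1, e2, e3] at step
    calc μ (cthickening (a ^ (m + 1) * r) E ∩ ball z R)
        = μ (cthickening (a ^ m * (a * r)) E ∩ ball z R) := by rw [pow_succ, mul_assoc]
      _ ≤ θ ^ m * μ (cthickening (a * r) E ∩ ball z (R + a * r)) := ih (by positivity) R
      _ ≤ θ ^ m * (θ * μ (cthickening r E ∩ ball z (R + r))) := by gcongr
      _ = θ ^ (m + 1) * μ (cthickening r E ∩ ball z (R + r)) := by rw [pow_succ, mul_assoc]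

theorem IsPorousWith.exists_measure_cthickening_inter_ball_le (hc : 0 < c)
    (hE : IsPorousWith c E) {δ : ℝ≥0∞} (hδ : δ ≠ 0) :
    ∃ κ : ℝ, 0 < κ ∧ ∀ (z : V) (R : ℝ), 0 < R →
      μ (cthickening (κ * R) E ∩ ball z R) ≤ δ * μ (ball z R) := by
  set θ := 1 - ENNReal.ofReal ((c / 2) ^ finrank ℝ V)
  have hθ : θ < 1 := ENNReal.sub_lt_self ENNReal.one_ne_top one_ne_zero
    (ENNReal.ofReal_pos.2 (by positivity)).ne'
  have hdoubling : ENNReal.ofReal (2 ^ finrank ℝ V) ≠ 0 :=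
    (ENNReal.ofReal_pos.2 (by positivity)).ne'
  obtain ⟨m, hm⟩ := ((ENNReal.tendsto_pow_atTop_nhds_zero_of_lt_one hθ).eventually
    (gt_mem_nhds (ENNReal.div_pos_iff.2 ⟨hδ, ENNReal.ofReal_ne_top⟩))).exists
  have hm' : θ ^ m * ENNReal.ofReal (2 ^ finrank ℝ V) ≤ δ :=
    (ENNReal.le_div_iff_mul_le (Or.inl hdoubling) (Or.inl ENNReal.ofReal_ne_top)).1 hm.le
  refine ⟨(c / (c + 2)) ^ m, by positivity, fun z R hR => ?_⟩
  calc μ (cthickening ((c / (c + 2)) ^ m * R) E ∩ ball z R)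
      ≤ θ ^ m * μ (cthickening R E ∩ ball z (R + R)) :=
        hE.measure_cthickening_inter_ball_le_pow_mul μ hc z m hR R
    _ ≤ θ ^ m * μ (ball z (2 * R)) := by
        rw [two_mul]; gcongr; exact inter_subset_right
    _ = θ ^ m * ENNReal.ofReal (2 ^ finrank ℝ V) * μ (ball z R) := by
        rw [Measure.addHaar_ball_mul_of_pos μ z two_pos, Measure.addHaar_ball_center μ z, mul_assoc]
    _ ≤ δ * μ (ball z R) := by gcongr

end Porous

theorem small_sets_estimate_implies_lowerAikawa_general {n : ℕ} (α : ℝ) (hα0 : 0 ≤ α)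
    (E : Set (EuclideanSpace ℝ (Fin n)))
    (hpor : IsPorousSet E)
    (hB : ∀ ε : ℝ, 0 < ε → ∃ δ : ℝ, 0 < δ ∧
      ∀ z ∈ E, ∀ R : ℝ, 0 < R →
        ∀ K : Set (EuclideanSpace ℝ (Fin n)), MeasurableSet K →
          volume (K ∩ ball z R) ≤ ENNReal.ofReal δ * volume (ball z R) →
          (volume (ball z R))⁻¹ *
              ∫⁻ y in ball z R ∩ K, ENNReal.ofReal (infDist y E ^ (-α)) ∂volume ≤
            ENNReal.ofReal (ε * R ^ (-α))) :
    lowerAikawaCond volume E α := by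
  obtain ⟨c, hc, hcE⟩ := hpor
  obtain ⟨δ, hδ, hsmall⟩ := hB 1 one_pos
  obtain ⟨κ, hκ, hthin⟩ := IsPorousWith.exists_measure_cthickening_inter_ball_le volume hc hcE
    (ENNReal.ofReal_pos.2 hδ).ne'
  refine ⟨1 + κ ^ (-α), by positivity, fun z hz R hR _ => ?_⟩
  set K := cthickening (κ * R) E
  have hK : MeasurableSet K := isClosed_cthickening.measurableSet
  set f := fun y => ENNReal.ofReal (infDist y E ^ (-α))
  set B := volume (ball z R)
  have hnear : B⁻¹ * ∫⁻ y in ball z R ∩ K, f y ≤ ENNReal.ofReal (1 * R ^ (-α)) :=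
    hsmall z hz R hR K hK (hthin z R hR)
  have hfar : B⁻¹ * ∫⁻ y in ball z R \ K, f y ≤ ENNReal.ofReal (κ ^ (-α) * R ^ (-α)) :=
    calc B⁻¹ * ∫⁻ y in ball z R \ K, f y ≤ B⁻¹ * (ENNReal.ofReal ((κ * R) ^ (-α)) * B) := by
          gcongr
          exact setLIntegral_sdiff_cthickening_infDist_rpow_le volume ⟨z, hz⟩ hα0 (by positivity) _
      _ = ENNReal.ofReal (κ ^ (-α) * R ^ (-α)) := by
          rw [mul_comm, mul_assoc, ENNReal.mul_inv_cancel (measure_ball_pos _ z hR).ne'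
            measure_ball_lt_top.ne, mul_one, Real.mul_rpow hκ.le hR.le]
  calc B⁻¹ * ∫⁻ y in ball z R, f y
      = (B⁻¹ * ∫⁻ y in ball z R ∩ K, f y) + B⁻¹ * ∫⁻ y in ball z R \ K, f y := by
        rw [← mul_add, lintegral_inter_add_sdiff _ _ hK]
    _ ≤ ENNReal.ofReal (1 * R ^ (-α)) + ENNReal.ofReal (κ ^ (-α) * R ^ (-α)) :=
        add_le_add hnear hfar
    _ = ENNReal.ofReal ((1 + κ ^ (-α)) * R ^ (-α)) := by
        rw [← ENNReal.ofReal_add (by positivity) (by positivity), add_mul]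

/-- Let `E ⊆ ℝⁿ` be nonempty and `0 ≤ α < n`. Assume `E` is porous and
`dist(·,E)^{-α}` is locally integrable. If for every `ε > 0` there is `δ > 0` such that
`⨍_{B(z,R)} 1_K dist(·,E)^{-α} ≤ ε R^{-α}` whenever `z ∈ E`, `R > 0` and `K` is measurable
with `μ(K ∩ B(z,R)) ≤ δ μ(B(z,R))`, then `E` satisfies the lower Aikawa condition with
exponent `α`. -/
theorem small_sets_estimate_implies_lowerAikawa {n : ℕ} (α : ℝ) (hα0 : 0 ≤ α) (hαn : α < (n : ℝ))
    (E : Set (EuclideanSpace ℝ (Fin n))) (hE : E.Nonempty)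
    (hpor : IsPorousSet E)
    (hloc : LocallyIntegrable (fun y => infDist y E ^ (-α)) volume)
    (hB : ∀ ε : ℝ, 0 < ε → ∃ δ : ℝ, 0 < δ ∧
      ∀ z ∈ E, ∀ R : ℝ, 0 < R →
        ∀ K : Set (EuclideanSpace ℝ (Fin n)), MeasurableSet K →
          volume (K ∩ ball z R) ≤ ENNReal.ofReal δ * volume (ball z R) →
          (volume (ball z R))⁻¹ *
              ∫⁻ y in ball z R ∩ K, ENNReal.ofReal (infDist y E ^ (-α)) ∂volume ≤
            ENNReal.ofReal (ε * R ^ (-α))) :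
    lowerAikawaCond volume E α :=
  small_sets_estimate_implies_lowerAikawa_general α hα0 E hpor hB
end

section
/- Let E ⊂ X be a closed set, z ∈ E, r > 0, and let F be the truncated set obtained from E, z, r by the truncation construction. Let m ∈ ℕ₀ and x ∈ X be such that dist(x,F) < 2^{−m+1} r, and write r_m = 2^{−m−1} r. Then there exists a point y ∈ E such that B(y, r_m) ⊂ B(x, 8 r_m) and E ∩ closedBall(y, r_m/2) = F ∩ closedBall(y, r_m/2). -/
open Metric MeasureTheory Set
open scoped ENNReal NNReal

/-- The truncation sequence: `F₀ = E ∩ closedBall z (r/2)` and recursively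
`F_{j+1} = ⋃_{x ∈ F_j} E ∩ closedBall x (r / 2^(j+2))`. -/
def truncSeq {X : Type*} [MetricSpace X] (E : Set X) (z : X) (r : ℝ) : ℕ → Set X
  | 0 => E ∩ closedBall z (r / 2)
  | j + 1 => ⋃ x ∈ truncSeq E z r j, E ∩ closedBall x (r / 2 ^ (j + 2))

/-- The truncated set `F`, the closure of the union of the truncation sequence. -/
def truncSet {X : Type*} [MetricSpace X] (E : Set X) (z : X) (r : ℝ) : Set X :=
  closure (⋃ j : ℕ, truncSeq E z r j)

/-!
Every point of `⋃ F_j` is within `r_m` of a point `y` of some `F_i` with `i ≤ m`: follow the chain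
of centres `F_{m+k} → F_{m+k-1} → ⋯ → F_m`, whose steps `r / 2^(j+2)` sum to less than `r_m`.
Such a `y` lies within `6 r_m` of `x`, and by construction `F_{i+1}` already contains all of
`E ∩ closedBall y (r / 2^(i+2)) ⊇ E ∩ closedBall y (r_m / 2)`.
-/

namespace truncSeq

variable {X : Type*} [MetricSpace X] {E : Set X} {z : X} {r : ℝ}

lemma subset : ∀ j, truncSeq E z r j ⊆ E
  | 0 => inter_subset_left
  | _ + 1 => iUnion₂_subset fun _ _ => inter_subset_left

lemma subset_truncSet (j : ℕ) : truncSeq E z r j ⊆ truncSet E z r :=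
  (subset_iUnion _ j).trans subset_closure

lemma inter_closedBall_subset_succ {i : ℕ} {y : X} (hy : y ∈ truncSeq E z r i) :
    E ∩ closedBall y (r / 2 ^ (i + 2)) ⊆ truncSeq E z r (i + 1) :=
  subset_iUnion₂ (s := fun y _ => E ∩ closedBall y (r / 2 ^ (i + 2))) y hy

lemma exists_mem_dist_le (m : ℕ) :
    ∀ k, ∀ y ∈ truncSeq E z r (m + k),
      ∃ y' ∈ truncSeq E z r m, dist y y' ≤ r / 2 ^ (m + 1) - r / 2 ^ (m + 1 + k)
  | 0 => fun y hy => ⟨y, hy, by simp⟩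
  | k + 1 => fun y hy => by
    obtain ⟨p, hp, -, hyp⟩ := mem_iUnion₂.mp hy
    obtain ⟨y', hy', hpy'⟩ := exists_mem_dist_le m k p hp
    refine ⟨y', hy', ?_⟩
    calc dist y y' ≤ dist y p + dist p y' := dist_triangle _ _ _
      _ ≤ r / 2 ^ (m + k + 2) + (r / 2 ^ (m + 1) - r / 2 ^ (m + 1 + k)) :=
          add_le_add (mem_closedBall.mp hyp) hpy'
      _ = r / 2 ^ (m + 1) - r / 2 ^ (m + 1 + (k + 1)) := by ring

lemma exists_le_mem_dist_le (hr : 0 ≤ r) (m : ℕ) {w : X} (hw : w ∈ ⋃ j, truncSeq E z r j) :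
    ∃ i ≤ m, ∃ y ∈ truncSeq E z r i, dist w y ≤ r / 2 ^ (m + 1) := by
  obtain ⟨j, hwj⟩ := mem_iUnion.mp hw
  rcases le_or_gt j m with hjm | hmj
  · exact ⟨j, hjm, w, hwj, by rw [dist_self]; positivity⟩
  · obtain ⟨k, rfl⟩ := Nat.exists_eq_add_of_le hmj.le
    obtain ⟨y, hy, hwy⟩ := exists_mem_dist_le m k w hwj
    have : 0 ≤ r / 2 ^ (m + 1 + k) := by positivity
    exact ⟨m, le_rfl, y, hy, by linarith⟩

end truncSeq

namespace truncSet

variable {X : Type*} [MetricSpace X] {E : Set X} {z : X} {r : ℝ}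

lemma subset (hE : IsClosed E) : truncSet E z r ⊆ E :=
  hE.closure_subset_iff.mpr (iUnion_subset truncSeq.subset)

lemma center_mem (hz : z ∈ E) (hr : 0 ≤ r) : z ∈ truncSet E z r :=
  truncSeq.subset_truncSet 0 ⟨hz, mem_closedBall_self (by positivity)⟩

lemma exists_le_mem_truncSeq_dist_lt (hz : z ∈ E) (hr : 0 < r) (m : ℕ) {x : X}
    (hx : infDist x (truncSet E z r) < 4 * (r / 2 ^ (m + 1))) :
    ∃ i ≤ m, ∃ y ∈ truncSeq E z r i, dist x y < 6 * (r / 2 ^ (m + 1)) := by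
  have hrm : 0 < r / 2 ^ (m + 1) := by positivity
  obtain ⟨w, hwF, hxw⟩ := (infDist_lt_iff ⟨z, center_mem hz hr.le⟩).mp hx
  obtain ⟨w', hw', hww'⟩ := Metric.mem_closure_iff.mp hwF _ hrm
  obtain ⟨i, him, y, hy, hw'y⟩ := truncSeq.exists_le_mem_dist_le hr.le m hw'
  refine ⟨i, him, y, hy, ?_⟩
  calc dist x y ≤ dist x w + dist w w' + dist w' y := dist_triangle4 _ _ _ _
    _ < 6 * (r / 2 ^ (m + 1)) := by linarith

lemma inter_closedBall_eq (hE : IsClosed E) {i : ℕ} {y : X} (hy : y ∈ truncSeq E z r i)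
    {ρ : ℝ} (hρ : ρ ≤ r / 2 ^ (i + 2)) :
    E ∩ closedBall y ρ = truncSet E z r ∩ closedBall y ρ := by
  refine Subset.antisymm (fun u ⟨huE, huy⟩ => ⟨?_, huy⟩) (inter_subset_inter_left _ (subset hE))
  exact truncSeq.subset_truncSet (i + 1)
    (truncSeq.inter_closedBall_subset_succ hy ⟨huE, closedBall_subset_closedBall hρ huy⟩)

end truncSet

theorem truncSet_big_pieces_general {X : Type*} [MetricSpace X]
    (E : Set X) (hE : IsClosed E) (z : X) (hz : z ∈ E) (r : ℝ) (hr : 0 < r)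
    (m : ℕ) (x : X)
    (hx : infDist x (truncSet E z r) < 2 * r / 2 ^ m) :
    ∃ y ∈ E, ball y (r / 2 ^ (m + 1)) ⊆ ball x (8 * (r / 2 ^ (m + 1))) ∧
      E ∩ closedBall y (r / 2 ^ (m + 1) / 2) =
        truncSet E z r ∩ closedBall y (r / 2 ^ (m + 1) / 2) := by
  have h4 : 2 * r / 2 ^ m = 4 * (r / 2 ^ (m + 1)) := by rw [pow_succ]; ring
  obtain ⟨i, him, y, hy, hxy⟩ :=
    truncSet.exists_le_mem_truncSeq_dist_lt hz hr m (h4 ▸ hx)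
  have hradius : r / 2 ^ (m + 1) / 2 ≤ r / 2 ^ (i + 2) := by
    rw [div_div, ← pow_succ]
    exact div_le_div_of_nonneg_left hr.le (by positivity) (pow_le_pow_right₀ one_le_two (by omega))
  refine ⟨y, truncSeq.subset i hy, ball_subset_ball' ?_, truncSet.inter_closedBall_eq hE hy hradius⟩
  have hrm : 0 < r / 2 ^ (m + 1) := by positivity
  rw [dist_comm]
  linarith

/-- Near the truncated set `F`, at scale `r_m = 2^{-m-1} r`, there is a point `y ∈ E`
with `B(y, r_m) ⊆ B(x, 8 r_m)` such that `E` and `F` coincide on `closedBall y (r_m/2)`. -/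
theorem truncSet_big_pieces {X : Type*} [MetricSpace X] [MeasurableSpace X] [BorelSpace X]
    [Nontrivial X]
    (μ : Measure X) (c_μ : ℝ) (hc : 1 < c_μ)
    (hball : ∀ (x : X) (ρ : ℝ), 0 < ρ → 0 < μ (ball x ρ) ∧ μ (ball x ρ) < ⊤)
    (hdoubling : ∀ (x : X) (ρ : ℝ), 0 < ρ →
      μ (ball x (2 * ρ)) ≤ ENNReal.ofReal c_μ * μ (ball x ρ))
    (E : Set X) (hE : IsClosed E) (z : X) (hz : z ∈ E) (r : ℝ) (hr : 0 < r)
    (m : ℕ) (x : X)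
    (hx : infDist x (truncSet E z r) < 2 * r / 2 ^ m) :
    ∃ y ∈ E, ball y (r / 2 ^ (m + 1)) ⊆ ball x (8 * (r / 2 ^ (m + 1))) ∧
      E ∩ closedBall y (r / 2 ^ (m + 1) / 2) =
        truncSet E z r ∩ closedBall y (r / 2 ^ (m + 1) / 2) :=
  truncSet_big_pieces_general E hE z hz r hr m x hx
end

section
/- Let α > 0 and assume a closed set E ⊂ X satisfies the upper Aikawa condition with exponent α. Then for every ε > 0 there exists δ > 0 with the following property. Let z ∈ E, r > 0, and let F be the truncated set obtained from E, z, r by the truncation construction. Let m ∈ ℕ₀ and x ∈ X be such that dist(x,F) < 2^{−m+1} r and either 2^{−m−3} r < diam(E) if diam(E) > 0, or 2^{−m−3} r < diam(X) if diam(E) = 0. Write r_m = 2^{−m−1} r. If K ⊂ X is a Borel set such that (1/μ(B(x,8r_m))) ∫_{B(x,8r_m)} 1_{X\K}(y) dμ(y) ≤ δ, then r_m^{−α} ≤ ε · (1/μ(B(x,8r_m))) ∫_{B(x,8r_m)} 1_K(y) dist(y,F)^{−α} dμ(y). -/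
open Metric MeasureTheory Set
open scoped ENNReal NNReal

/-- `E` satisfies the upper Aikawa condition with exponent `α`. -/
def upperAikawaCond {X : Type*} [MetricSpace X] [MeasurableSpace X]
    (μ : Measure X) (E : Set X) (α : ℝ) : Prop :=
  ∀ ε : ℝ, 0 < ε → ∃ δ : ℝ, 0 < δ ∧
    ∀ z ∈ E, ∀ R : ℝ, 0 < R → ENNReal.ofReal R < diamBound E →
      ∀ K : Set X, MeasurableSet K →
        μ (ball z R \ K) ≤ ENNReal.ofReal δ * μ (ball z R) →
        ENNReal.ofReal (R ^ (-α) / ε) ≤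
          (μ (ball z R))⁻¹ *
            ∫⁻ y in ball z R ∩ K, ENNReal.ofReal (infDist y E ^ (-α)) ∂μ

/-!
A point `w` of the `m`-th truncation step `F_m` captures every point of `E` within
`r / 2 ^ (m + 2)` of it into `F`, so on the ball of radius `ρ = r / 2 ^ (m + 3)` about `w`
the distance to `F` is the distance to `E`. A point `x` with `dist(x, F) < 2^{-m+1} r` lies
within `20 ρ` of such a `w`, hence `B(w, ρ) ⊆ B(x, 8 r_m) = B(x, 32 ρ) ⊆ B(w, 2^6 ρ)`. The
Aikawa condition for `E` on `B(w, ρ)` therefore transfers to `F` on `B(x, 8 r_m)`, the doubling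
constant `c_μ^6` being absorbed into `ε` and `δ`.
-/

theorem Metric.infDist_eq_of_inter_closedBall_subset {X : Type*} [MetricSpace X]
    {E A : Set X} {w y : X} {ρ : ℝ} (hAE : A ⊆ closure E) (hw : w ∈ E)
    (hEA : E ∩ closedBall w (2 * ρ) ⊆ A) (hy : y ∈ ball w ρ) :
    infDist y A = infDist y E := by
  have hwA : w ∈ A := hEA ⟨hw, mem_closedBall_self (by linarith [pos_of_mem_ball hy])⟩
  refine le_antisymm ((le_infDist ⟨w, hw⟩).mpr fun e he => ?_) ?_
  · by_cases hew : e ∈ closedBall w (2 * ρ)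
    · exact infDist_le_dist_of_mem (hEA ⟨he, hew⟩)
    · rw [mem_closedBall, not_le] at hew
      linarith [mem_ball.mp hy, dist_triangle e y w, dist_comm e y, dist_comm e w,
        infDist_le_dist_of_mem (x := y) hwA]
  · rw [← infDist_closure (s := E)]
    exact infDist_le_infDist_of_subset hAE ⟨w, hwA⟩

namespace TruncSet

variable {X : Type*} [MetricSpace X] {E : Set X} {z : X} {r : ℝ}

theorem truncSeq_subset (j : ℕ) : truncSeq E z r j ⊆ E := by
  cases j with
  | zero => exact inter_subset_left
  | succ j =>
    intro w hw
    obtain ⟨_, _, hwE, _⟩ := mem_iUnion₂.mp hw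
    exact hwE

theorem truncSet_subset_closure : truncSet E z r ⊆ closure E :=
  closure_mono (iUnion_subset truncSeq_subset)

theorem truncSeq_mono (hr : 0 ≤ r) : Monotone (truncSeq E z r) :=
  monotone_nat_of_le_succ fun j w hw =>
    mem_iUnion₂.mpr ⟨w, hw, truncSeq_subset j hw, mem_closedBall_self (by positivity)⟩

theorem mem_truncSeq_zero (hz : z ∈ E) (hr : 0 ≤ r) : z ∈ truncSeq E z r 0 :=
  ⟨hz, mem_closedBall_self (by positivity)⟩

theorem inter_closedBall_subset_truncSet {m : ℕ} {w : X} (hw : w ∈ truncSeq E z r m) :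
    E ∩ closedBall w (r / 2 ^ (m + 2)) ⊆ truncSet E z r := fun _ he =>
  subset_closure (mem_iUnion.mpr ⟨m + 1, mem_iUnion₂.mpr ⟨w, hw, he⟩⟩)

theorem infDist_truncSet_eq_of_mem_ball {m : ℕ} {w y : X} (hw : w ∈ truncSeq E z r m)
    (hy : y ∈ ball w (r / 2 ^ (m + 3))) : infDist y (truncSet E z r) = infDist y E := by
  have hradius : 2 * (r / 2 ^ (m + 3)) = r / 2 ^ (m + 2) := by field_simp; ring
  exact infDist_eq_of_inter_closedBall_subset truncSet_subset_closure (truncSeq_subset m hw)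
    (hradius ▸ inter_closedBall_subset_truncSet hw) hy

theorem exists_mem_truncSeq_dist_le {m n : ℕ} (hmn : m ≤ n) {w : X}
    (hw : w ∈ truncSeq E z r n) :
    ∃ w' ∈ truncSeq E z r m, dist w w' ≤ r / 2 ^ (m + 1) - r / 2 ^ (n + 1) := by
  induction n, hmn using Nat.le_induction generalizing w with
  | base => exact ⟨w, hw, by simp⟩
  | succ n _ ih =>
    obtain ⟨v, hv, -, hwv⟩ := mem_iUnion₂.mp hw
    obtain ⟨w', hw', hvw'⟩ := ih hv
    refine ⟨w', hw', (dist_triangle w v w').trans ?_⟩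
    have hstep : r / 2 ^ (n + 1) = 2 * (r / 2 ^ (n + 1 + 1)) := by
      rw [pow_succ]; field_simp; ring
    linarith [mem_closedBall.mp hwv]

theorem exists_mem_truncSeq_dist_lt (hz : z ∈ E) (hr : 0 ≤ r) (m : ℕ) {x : X} {s : ℝ}
    (hx : infDist x (truncSet E z r) < s) :
    ∃ w ∈ truncSeq E z r m, dist x w < s + r / 2 ^ (m + 1) := by
  rw [truncSet, infDist_closure] at hx
  obtain ⟨u, hu, hxu⟩ :=
    (infDist_lt_iff ⟨z, mem_iUnion.mpr ⟨0, mem_truncSeq_zero hz hr⟩⟩).mp hx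
  obtain ⟨n, hun⟩ := mem_iUnion.mp hu
  obtain ⟨w, hw, huw⟩ := exists_mem_truncSeq_dist_le (m.le_add_right n)
    (truncSeq_mono hr (n.le_add_left m) hun)
  refine ⟨w, hw, (dist_triangle x u w).trans_lt ?_⟩
  have : 0 ≤ r / 2 ^ (m + n + 1) := by positivity
  linarith

end TruncSet

section Doubling

variable {X : Type*} [PseudoMetricSpace X] [MeasurableSpace X] {μ : Measure X} {c : ℝ}

theorem measure_ball_two_pow_mul_le
    (hdoubling : ∀ (x : X) (ρ : ℝ), 0 < ρ → μ (ball x (2 * ρ)) ≤ ENNReal.ofReal c * μ (ball x ρ))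
    (x : X) {ρ : ℝ} (hρ : 0 < ρ) (k : ℕ) :
    μ (ball x (2 ^ k * ρ)) ≤ ENNReal.ofReal c ^ k * μ (ball x ρ) := by
  induction k with
  | zero => simp
  | succ k ih =>
    calc μ (ball x (2 ^ (k + 1) * ρ)) = μ (ball x (2 * (2 ^ k * ρ))) := by ring_nf
      _ ≤ ENNReal.ofReal c * μ (ball x (2 ^ k * ρ)) := hdoubling x _ (by positivity)
      _ ≤ ENNReal.ofReal c * (ENNReal.ofReal c ^ k * μ (ball x ρ)) := by gcongr
      _ = ENNReal.ofReal c ^ (k + 1) * μ (ball x ρ) := by ring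

theorem measure_ball_le_pow_mul_measure_ball
    (hdoubling : ∀ (x : X) (ρ : ℝ), 0 < ρ → μ (ball x (2 * ρ)) ≤ ENNReal.ofReal c * μ (ball x ρ))
    {x w : X} {R ρ : ℝ} (hρ : 0 < ρ) {k : ℕ} (h : R + dist x w ≤ 2 ^ k * ρ) :
    μ (ball x R) ≤ ENNReal.ofReal c ^ k * μ (ball w ρ) :=
  (measure_mono (ball_subset_ball' h)).trans (measure_ball_two_pow_mul_le hdoubling w hρ k)

end Doubling

section Averages

variable {X : Type*} [MeasurableSpace X] {μ : Measure X} {B B' K : Set X} {C : ℝ≥0∞}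

theorem measure_diff_le_of_subset_of_le_mul {δ : ℝ≥0∞} (hB'B : B' ⊆ B)
    (hB : μ B ≤ C * μ B') (hB0 : μ B ≠ 0) (hBtop : μ B ≠ ∞)
    (h : (μ B)⁻¹ * μ (B \ K) ≤ δ) : μ (B' \ K) ≤ δ * C * μ B' :=
  calc μ (B' \ K) ≤ μ (B \ K) := measure_mono (sdiff_subset_sdiff_left hB'B)
    _ = μ B * ((μ B)⁻¹ * μ (B \ K)) := by
        rw [← mul_assoc, ENNReal.mul_inv_cancel hB0 hBtop, one_mul]
    _ ≤ μ B * δ := by gcongr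
    _ ≤ C * μ B' * δ := by gcongr
    _ = δ * C * μ B' := by ring

theorem inv_mul_setLIntegral_le_of_subset_of_le_mul (f : X → ℝ≥0∞)
    (hB'B : B' ⊆ B) (hB : μ B ≤ C * μ B') (hB0 : μ B ≠ 0) (hBtop : μ B ≠ ∞) :
    (μ B')⁻¹ * ∫⁻ y in B' ∩ K, f y ∂μ ≤ C * ((μ B)⁻¹ * ∫⁻ y in B ∩ K, f y ∂μ) := by
  have hinv : (μ B')⁻¹ ≤ C * (μ B)⁻¹ := by
    rw [← div_eq_mul_inv, ENNReal.le_div_iff_mul_le (Or.inl hB0) (Or.inl hBtop), mul_comm]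
    exact ENNReal.div_le_of_le_mul hB
  calc (μ B')⁻¹ * ∫⁻ y in B' ∩ K, f y ∂μ ≤ C * (μ B)⁻¹ * ∫⁻ y in B ∩ K, f y ∂μ := by
        gcongr
    _ = C * ((μ B)⁻¹ * ∫⁻ y in B ∩ K, f y ∂μ) := mul_assoc _ _ _

end Averages

theorem ENNReal.ofReal_le_mul_of_ofReal_div_le {a C ε : ℝ} {I : ℝ≥0∞} (hε : 0 < ε)
    (hC : 0 < C) (h : ENNReal.ofReal (a / (ε / C)) ≤ ENNReal.ofReal C * I) :
    ENNReal.ofReal a ≤ ENNReal.ofReal ε * I :=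
  calc ENNReal.ofReal a = ENNReal.ofReal (ε / C) * ENNReal.ofReal (a / (ε / C)) := by
        rw [← ENNReal.ofReal_mul (by positivity), mul_div_cancel₀ _ (by positivity)]
    _ ≤ ENNReal.ofReal (ε / C) * (ENNReal.ofReal C * I) := by gcongr
    _ = ENNReal.ofReal ε * I := by
        rw [← mul_assoc, ← ENNReal.ofReal_mul (by positivity), div_mul_cancel₀ _ hC.ne']

open TruncSet in
theorem truncSet_upperAikawa_local_general {X : Type*} [MetricSpace X] [MeasurableSpace X] [BorelSpace X]
    (μ : Measure X) (c_μ : ℝ) (hc : 1 < c_μ)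
    (hball : ∀ (x : X) (ρ : ℝ), 0 < ρ → 0 < μ (ball x ρ) ∧ μ (ball x ρ) < ⊤)
    (hdoubling : ∀ (x : X) (ρ : ℝ), 0 < ρ →
      μ (ball x (2 * ρ)) ≤ ENNReal.ofReal c_μ * μ (ball x ρ))
    (α : ℝ) (hα : 0 < α)
    (E : Set X)
    (haik : upperAikawaCond μ E α) :
    ∀ ε : ℝ, 0 < ε → ∃ δ : ℝ, 0 < δ ∧
      ∀ z ∈ E, ∀ r : ℝ, 0 < r → ∀ (m : ℕ) (x : X),
        infDist x (truncSet E z r) < 2 * r / 2 ^ m →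
        ENNReal.ofReal (r / 2 ^ (m + 3)) < diamBound E →
        ∀ K : Set X, MeasurableSet K →
          (μ (ball x (8 * (r / 2 ^ (m + 1)))))⁻¹ *
              μ (ball x (8 * (r / 2 ^ (m + 1))) \ K) ≤ ENNReal.ofReal δ →
          ENNReal.ofReal ((r / 2 ^ (m + 1)) ^ (-α)) ≤
            ENNReal.ofReal ε *
              ((μ (ball x (8 * (r / 2 ^ (m + 1)))))⁻¹ *
                ∫⁻ y in ball x (8 * (r / 2 ^ (m + 1))) ∩ K,
                  ENNReal.ofReal (infDist y (truncSet E z r) ^ (-α)) ∂μ) := by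
  intro ε hε
  have hC : 0 < c_μ ^ 6 := by positivity
  obtain ⟨δ, hδ, haikδ⟩ := haik (ε / c_μ ^ 6) (by positivity)
  refine ⟨δ / c_μ ^ 6, by positivity, fun z hz r hr m x hxF hdiam K hK hsmall => ?_⟩
  set ρ := r / 2 ^ (m + 3) with hρ_def
  have hρ : 0 < ρ := by positivity
  have hr_m : r / 2 ^ (m + 1) = 4 * ρ := by rw [hρ_def]; field_simp; ring
  obtain ⟨w, hw, hxw⟩ := exists_mem_truncSeq_dist_lt hz hr.le m hxF
  rw [hr_m, show 2 * r / 2 ^ m = 16 * ρ by rw [hρ_def]; field_simp; ring] at hxw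
  rw [hr_m, show 8 * (4 * ρ) = 32 * ρ by ring] at hsmall ⊢
  obtain ⟨hB0, hBtop⟩ := hball x (32 * ρ) (by positivity)
  have hsub : ball w ρ ⊆ ball x (32 * ρ) := ball_subset_ball' (by linarith [dist_comm x w])
  have hB : μ (ball x (32 * ρ)) ≤ ENNReal.ofReal (c_μ ^ 6) * μ (ball w ρ) := by
    rw [ENNReal.ofReal_pow (by linarith)]
    exact measure_ball_le_pow_mul_measure_ball hdoubling hρ (by linarith)
  have hsmall_w : μ (ball w ρ \ K) ≤ ENNReal.ofReal δ * μ (ball w ρ) := by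
    have := measure_diff_le_of_subset_of_le_mul hsub hB hB0.ne' hBtop.ne hsmall
    rwa [← ENNReal.ofReal_mul (by positivity), div_mul_cancel₀ _ hC.ne'] at this
  have haik_w := haikδ w (truncSeq_subset m hw) ρ hρ hdiam K hK hsmall_w
  rw [setLIntegral_congr_fun (isOpen_ball.measurableSet.inter hK)
    (g := fun y => ENNReal.ofReal (infDist y (truncSet E z r) ^ (-α)))
    fun y hy => by simp only [infDist_truncSet_eq_of_mem_ball hw hy.1]] at haik_w
  calc ENNReal.ofReal ((4 * ρ) ^ (-α)) ≤ ENNReal.ofReal (ρ ^ (-α)) :=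
        ENNReal.ofReal_le_ofReal
          (Real.rpow_le_rpow_of_nonpos hρ (by linarith) (neg_nonpos.mpr hα.le))
    _ ≤ _ := ENNReal.ofReal_le_mul_of_ofReal_div_le hε hC (haik_w.trans
        (inv_mul_setLIntegral_le_of_subset_of_le_mul _ hsub hB hB0.ne' hBtop.ne))

/-- A local variant of the upper Aikawa condition persists for the truncated set `F`:
if `E` satisfies the upper Aikawa condition with exponent `α`, then for every `ε > 0`
there is `δ > 0` such that whenever `dist(x,F) < 2^{-m+1} r`, the scale `2^{-m-3} r` is
admissible, and `K` is a Borel set whose complement occupies at most a `δ`-fraction of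
`B(x, 8 r_m)` (where `r_m = 2^{-m-1} r`), one has
`r_m^{-α} ≤ ε ⨍_{B(x,8r_m)} 1_K dist(·,F)^{-α} dμ`. -/
theorem truncSet_upperAikawa_local {X : Type*} [MetricSpace X] [MeasurableSpace X] [BorelSpace X]
    [Nontrivial X]
    (μ : Measure X) (c_μ : ℝ) (hc : 1 < c_μ)
    (hball : ∀ (x : X) (ρ : ℝ), 0 < ρ → 0 < μ (ball x ρ) ∧ μ (ball x ρ) < ⊤)
    (hdoubling : ∀ (x : X) (ρ : ℝ), 0 < ρ →
      μ (ball x (2 * ρ)) ≤ ENNReal.ofReal c_μ * μ (ball x ρ))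
    (α : ℝ) (hα : 0 < α)
    (E : Set X) (hE : IsClosed E) (hEne : E.Nonempty)
    (haik : upperAikawaCond μ E α) :
    ∀ ε : ℝ, 0 < ε → ∃ δ : ℝ, 0 < δ ∧
      ∀ z ∈ E, ∀ r : ℝ, 0 < r → ∀ (m : ℕ) (x : X),
        infDist x (truncSet E z r) < 2 * r / 2 ^ m →
        ENNReal.ofReal (r / 2 ^ (m + 3)) < diamBound E →
        ∀ K : Set X, MeasurableSet K →
          (μ (ball x (8 * (r / 2 ^ (m + 1)))))⁻¹ *
              μ (ball x (8 * (r / 2 ^ (m + 1))) \ K) ≤ ENNReal.ofReal δ →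
          ENNReal.ofReal ((r / 2 ^ (m + 1)) ^ (-α)) ≤
            ENNReal.ofReal ε *
              ((μ (ball x (8 * (r / 2 ^ (m + 1)))))⁻¹ *
                ∫⁻ y in ball x (8 * (r / 2 ^ (m + 1))) ∩ K,
                  ENNReal.ofReal (infDist y (truncSet E z r) ^ (-α)) ∂μ) :=
  truncSet_upperAikawa_local_general μ c_μ hc hball hdoubling α hα E haik
end

section
/- Let α > 0. If a nonempty set E ⊂ X satisfies the upper Aikawa condition with exponent α, then its closure, cl(E), also satisfies the upper Aikawa condition with exponent α. -/
/-!
Every `z ∈ closure E` has a point `z' ∈ E` with `dist z z' < R / 2`, so that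
`ball z' (R / 2) ⊆ ball z R ⊆ ball z' (2 * R)`. Doubling twice makes the two balls comparable
in measure with constant `c_μ ^ 2`. So the Aikawa inequality for `E` at `(z', R / 2)`, with
`ε` rescaled by `2 ^ α / c_μ ^ 2` and `δ` by `c_μ ^ 2`, gives the one for `closure E` at `(z, R)`,
since `infDist y (closure E) = infDist y E`.
-/

open Metric MeasureTheory Set
open scoped ENNReal NNReal

theorem diamBound_closure {X : Type*} [PseudoEMetricSpace X] (E : Set X) :
    diamBound (closure E) = diamBound E := by
  unfold diamBound
  rw [show EMetric.diam (closure E) = EMetric.diam E from Metric.ediam_closure E]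

theorem Real.div_two_rpow_neg {R : ℝ} (hR : 0 ≤ R) (α : ℝ) :
    (R / 2) ^ (-α) = 2 ^ α * R ^ (-α) := by
  rw [Real.div_rpow hR zero_le_two, Real.rpow_neg zero_le_two, div_inv_eq_mul, mul_comm]

theorem measure_ball_le_sq_mul_measure_ball_half {X : Type*} [MetricSpace X] [MeasurableSpace X]
    {μ : Measure X} {c : ℝ}
    (hdoubling : ∀ (x : X) (ρ : ℝ), 0 < ρ →
      μ (ball x (2 * ρ)) ≤ ENNReal.ofReal c * μ (ball x ρ))
    {z z' : X} {R : ℝ} (h : dist z z' < R / 2) :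
    μ (ball z R) ≤ ENNReal.ofReal c ^ 2 * μ (ball z' (R / 2)) := by
  have hR : 0 < R / 2 := dist_nonneg.trans_lt h
  calc μ (ball z R) ≤ μ (ball z' (2 * R)) := measure_mono (ball_subset_ball' (by linarith))
    _ ≤ ENNReal.ofReal c * μ (ball z' R) := hdoubling z' R (by linarith)
    _ ≤ ENNReal.ofReal c * (ENNReal.ofReal c * μ (ball z' (R / 2))) := by
        gcongr
        simpa only [mul_div_cancel₀ R two_ne_zero] using hdoubling z' (R / 2) hR
    _ = ENNReal.ofReal c ^ 2 * μ (ball z' (R / 2)) := by ring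

section Comparable

variable {X : Type*} [MeasurableSpace X] {μ : Measure X} {B B' K : Set X} {C : ℝ≥0∞}

theorem measure_diff_le_mul_of_subset (hB : B' ⊆ B) (hμ : μ B ≤ C * μ B') {δ : ℝ≥0∞}
    (hK : μ (B \ K) ≤ δ * μ B) : μ (B' \ K) ≤ δ * C * μ B' :=
  calc μ (B' \ K) ≤ μ (B \ K) := measure_mono (sdiff_subset_sdiff_left hB)
    _ ≤ δ * μ B := hK
    _ ≤ δ * C * μ B' := by rw [mul_assoc]; gcongr

theorem inv_mul_le_inv_measure_mul_setLIntegral_of_subset (hC₀ : C ≠ 0) (hC : C ≠ ∞)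
    (hB : B' ⊆ B) (hμ : μ B ≤ C * μ B') {f : X → ℝ≥0∞} {a : ℝ≥0∞}
    (ha : a ≤ (μ B')⁻¹ * ∫⁻ y in B' ∩ K, f y ∂μ) :
    C⁻¹ * a ≤ (μ B)⁻¹ * ∫⁻ y in B ∩ K, f y ∂μ :=
  calc C⁻¹ * a ≤ C⁻¹ * ((μ B')⁻¹ * ∫⁻ y in B' ∩ K, f y ∂μ) := by gcongr
    _ = (C * μ B')⁻¹ * ∫⁻ y in B' ∩ K, f y ∂μ := by
        rw [ENNReal.mul_inv (Or.inl hC₀) (Or.inl hC), mul_assoc]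
    _ ≤ (μ B)⁻¹ * ∫⁻ y in B ∩ K, f y ∂μ := by
        gcongr

end Comparable

theorem upperAikawa_closure_general {X : Type*} [MetricSpace X] [MeasurableSpace X]
    (μ : Measure X) (c_μ : ℝ) (hc : 1 < c_μ)
    (hdoubling : ∀ (x : X) (ρ : ℝ), 0 < ρ →
      μ (ball x (2 * ρ)) ≤ ENNReal.ofReal c_μ * μ (ball x ρ))
    (α : ℝ)
    (E : Set X)
    (haik : upperAikawaCond μ E α) :
    upperAikawaCond μ (closure E) α := by
  intro ε hε
  have hc₀ : 0 < c_μ := one_pos.trans hc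
  obtain ⟨δ, hδ, hE⟩ := haik (ε * 2 ^ α / c_μ ^ 2) (by positivity)
  refine ⟨δ / c_μ ^ 2, by positivity, fun z hz R hR hRd K hK hKδ => ?_⟩
  obtain ⟨z', hz'E, hzz'⟩ := Metric.mem_closure_iff.mp hz (R / 2) (by positivity)
  have hsub : ball z' (R / 2) ⊆ ball z R := ball_subset_ball' (by rw [dist_comm]; linarith)
  have hμ := measure_ball_le_sq_mul_measure_ball_half hdoubling hzz'
  rw [← ENNReal.ofReal_pow hc₀.le] at hμ
  have hRd' : ENNReal.ofReal (R / 2) < diamBound E :=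
    (ENNReal.ofReal_le_ofReal (by linarith)).trans_lt (diamBound_closure E ▸ hRd)
  have hKδ' := measure_diff_le_mul_of_subset hsub hμ hKδ
  rw [← ENNReal.ofReal_mul (by positivity), div_mul_cancel₀ δ (by positivity)] at hKδ'
  have hε' : ENNReal.ofReal (R ^ (-α) / ε) = (ENNReal.ofReal (c_μ ^ 2))⁻¹ *
      ENNReal.ofReal ((R / 2) ^ (-α) / (ε * 2 ^ α / c_μ ^ 2)) := by
    rw [← ENNReal.ofReal_inv_of_pos (by positivity), ← ENNReal.ofReal_mul (by positivity),
      Real.div_two_rpow_neg hR.le]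
    field_simp
  rw [hε']
  simp only [infDist_closure]
  exact inv_mul_le_inv_measure_mul_setLIntegral_of_subset (by positivity) ENNReal.ofReal_ne_top
    hsub hμ (hE z' hz'E (R / 2) (by positivity) hRd' K hK hKδ')

/-- If a nonempty set `E` satisfies the upper Aikawa condition with exponent `α > 0`,
then so does its closure. -/
theorem upperAikawa_closure {X : Type*} [MetricSpace X] [MeasurableSpace X]
    [BorelSpace X] [Nontrivial X]
    (μ : Measure X) (c_μ : ℝ) (hc : 1 < c_μ)
    (hball : ∀ (x : X) (ρ : ℝ), 0 < ρ → 0 < μ (ball x ρ) ∧ μ (ball x ρ) < ⊤)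
    (hdoubling : ∀ (x : X) (ρ : ℝ), 0 < ρ →
      μ (ball x (2 * ρ)) ≤ ENNReal.ofReal c_μ * μ (ball x ρ))
    (α : ℝ) (hα : 0 < α)
    (E : Set X) (hE : E.Nonempty)
    (haik : upperAikawaCond μ E α) :
    upperAikawaCond μ (closure E) α :=
  upperAikawa_closure_general μ c_μ hc hdoubling α E haik
end

section
/- Let 1 < p < ∞ and 0 < s < 1. Let E ⊂ X be a nonempty set, z ∈ E, and 0 < r < R < diam(E) (or 0 < r < R < diam(X) if diam(E) = 0). Define the Lipschitz function u : X → ℝ by u(x) = min{1, 4 r^{−1} dist(x,E)}. Then there exists a constant C > 0, independent of z, r and R, such that ∫_{B(z,R)} ∫_{B(z,R)} |u(x)−u(y)|^p / (d(x,y)^{sp} μ(B(x,d(x,y)))) dμ(y) dμ(x) ≤ C r^{−sp} μ(E_r ∩ B(z,R)). -/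
/-!
The test function `u` takes values in `[0, 1]`, is `4 / r`-Lipschitz and equals `1` off `E_r`, so
its Gagliardo kernel vanishes unless `x ∈ E_r` or `y ∈ E_r`, and is dominated by the capped kernel
`min(1, L d)^p / (d^{sp} μ(B(x, d)))`, `L = 4 / r`. Hence the double integral is at most
`μ(E_r ∩ B(z, R))` times the sum of the suprema of the row and column integrals of the capped
kernel. Splitting a row integral over the dyadic annuli `2^j ≤ L d < 2^{j+1}`, `j ∈ ℤ`, doubling
bounds the annulus `j` by `c_μ min(1, 2^{j+1})^p 2^{-jsp} L^{sp}`, a two-sided geometric series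
because `0 < s < 1`. Doubling also gives `μ(B(y, d)) ≤ c_μ μ(B(x, d))`, which turns column
integrals into row integrals.
-/

open Metric MeasureTheory Set
open scoped ENNReal NNReal

/-- The fractional `(s,p)`-Gagliardo kernel `|u x - u y|^p / (d(x,y)^{sp} μ(B(x,d(x,y))))`. -/
noncomputable def fracKernel {X : Type*} [MetricSpace X] [MeasurableSpace X]
    (μ : Measure X) (s p : ℝ) (u : X → ℝ) (x y : X) : ℝ≥0∞ :=
  ENNReal.ofReal (|u x - u y| ^ p) /
    (ENNReal.ofReal (dist x y ^ (s * p)) * μ (ball x (dist x y)))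

open Topology

section BallMeasures

variable {X : Type*} [PseudoMetricSpace X] [MeasurableSpace X]

theorem lowerSemicontinuous_measure_ball (μ : Measure X) :
    LowerSemicontinuous fun q : X × ℝ => μ (ball q.1 q.2) := by
  rintro ⟨x, t⟩ b (hb : b < μ (ball x t))
  obtain ⟨t', ht't, hbt'⟩ : ∃ t' < t, b < μ (ball x t') := by
    obtain ⟨u, hu_mono, hu_mem, hu_lim⟩ := exists_seq_strictMono_tendsto' (sub_one_lt t)
    have hunion : ball x t = ⋃ n, ball x (u n) := by
      ext y
      simp only [mem_ball, mem_iUnion]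
      exact ⟨fun hy => (hu_lim.eventually (lt_mem_nhds hy)).exists,
        fun ⟨n, hn⟩ => hn.trans (hu_mem n).2⟩
    rw [hunion, Monotone.measure_iUnion fun m n hmn => ball_subset_ball (hu_mono.monotone hmn),
      lt_iSup_iff] at hb
    obtain ⟨n, hn⟩ := hb
    exact ⟨u n, (hu_mem n).2, hn⟩
  have hnear : ∀ᶠ q : X × ℝ in 𝓝 (x, t), t' + dist x q.1 < q.2 :=
    (continuous_const.add (continuous_const.dist continuous_fst)).continuousAt.eventually_lt
      continuous_snd.continuousAt (by simpa using ht't)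
  filter_upwards [hnear] with q hq
  exact hbt'.trans_le (measure_mono (ball_subset_ball' hq.le))

/-- A maximal `ε`-separated set is `ε`-dense, and it is countable because the disjoint balls of
radius `ε / 2` around its points have positive measure. -/
theorem secondCountableTopology_of_measure_ball_pos [OpensMeasurableSpace X] (μ : Measure X)
    [SFinite μ] (hμ : ∀ x ρ, 0 < ρ → 0 < μ (ball x ρ)) : SecondCountableTopology X := by
  refine secondCountable_of_almost_dense_set fun ε hε => ?_
  obtain ⟨N, hN⟩ := zorn_subset {N : Set X | N.Pairwise fun x y => ε < dist x y}
    fun C hC hchain => ⟨⋃₀ C, (pairwise_sUnion hchain.directedOn).2 hC,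
      fun _ => subset_sUnion_of_mem⟩
  refine ⟨N, ?_, fun x => ?_⟩
  · have hdisj : Pairwise fun y y' : N => Disjoint (ball (y : X) (ε / 2)) (ball y' (ε / 2)) :=
      fun y y' hne =>
        ball_disjoint_ball (by linarith [hN.1 y.2 y'.2 (Subtype.coe_injective.ne hne)])
    have hpos : {y : N | 0 < μ (ball (y : X) (ε / 2))} = univ :=
      eq_univ_of_forall fun y => hμ _ _ (half_pos hε)
    have := Measure.countable_meas_pos_of_disjoint_iUnion (μ := μ)
      (fun _ => measurableSet_ball) hdisj
    rw [hpos, countable_univ_iff] at this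
    exact countable_coe_iff.mp this
  · by_contra! hfar
    have hins : insert x N ∈ {N : Set X | N.Pairwise fun x y => ε < dist x y} :=
      pairwise_insert.2 ⟨hN.1, fun y hy _ => ⟨hfar y hy, dist_comm x y ▸ hfar y hy⟩⟩
    have hx := hN.2 hins (subset_insert x N) (mem_insert x N)
    linarith [hfar x hx, dist_self x]

theorem sigmaFinite_of_measure_ball_lt_top [Nonempty X] (μ : Measure X)
    (hμ : ∀ x ρ, 0 < ρ → μ (ball x ρ) < ⊤) : SigmaFinite μ := by
  obtain ⟨x⟩ := ‹Nonempty X›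
  refine Measure.sigmaFinite_of_countable (countable_range fun n : ℕ => ball x (n + 1)) ?_ ?_
  · rintro _ ⟨n, rfl⟩
    exact hμ x _ n.cast_add_one_pos
  · rw [sUnion_range, iUnion_ball_nat_succ]

end BallMeasures

theorem abs_min_one_infDist_sub_le {X : Type*} [PseudoMetricSpace X] {L : ℝ} (hL : 0 ≤ L)
    (E : Set X) (x y : X) :
    |min 1 (L * infDist x E) - min 1 (L * infDist y E)| ≤ min 1 (L * dist x y) := by
  have h0 : ∀ w, 0 ≤ min 1 (L * infDist w E) := fun w =>
    le_min zero_le_one (mul_nonneg hL infDist_nonneg)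
  refine le_min (abs_sub_le_of_nonneg_of_le (h0 x) (min_le_left _ _) (h0 y) (min_le_left _ _))
    ((abs_min_sub_min_le_max _ _ _ _).trans ?_)
  rw [sub_self, abs_zero, max_eq_right (abs_nonneg _), ← mul_sub, abs_mul, abs_of_nonneg hL]
  gcongr
  simpa [Real.dist_eq] using (lipschitz_infDist_pt E).dist_le_mul x y

theorem exists_mem_annulus_zpow {X : Type*} [MetricSpace X] {L : ℝ} (hL : 0 < L) {a y : X}
    (hy : y ≠ a) :
    ∃ j : ℤ, y ∈ ball a (2 * (2 ^ j / L)) \ ball a (2 ^ j / L) := by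
  have hd : 0 < L * dist y a := mul_pos hL (dist_pos.2 hy)
  refine ⟨Int.log 2 (L * dist y a), ?_, ?_⟩
  · rw [mem_ball, ← mul_div_assoc, lt_div_iff₀ hL, mul_comm _ L, ← zpow_one_add₀ two_ne_zero,
      add_comm]
    exact_mod_cast Int.lt_zpow_succ_log_self (R := ℝ) one_lt_two (L * dist y a)
  · rw [mem_ball, not_lt, div_le_iff₀ hL, mul_comm (dist y a)]
    exact_mod_cast Int.zpow_log_le_self one_lt_two hd

/-- On the annulus `2 ^ j ≤ L * d < 2 ^ (j + 1)` the quantity `min 1 (L * d) ^ p / d ^ (s * p)`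
is at most `dyadicWeight s p j * L ^ (s * p)`. -/
noncomputable def dyadicWeight (s p : ℝ) (j : ℤ) : ℝ := min 1 (2 * 2 ^ j) ^ p / (2 ^ j) ^ (s * p)

theorem dyadicWeight_nonneg (s p : ℝ) (j : ℤ) : 0 ≤ dyadicWeight s p j := by
  unfold dyadicWeight
  positivity

theorem summable_dyadicWeight {s p : ℝ} (hp : 0 < p) (hs0 : 0 < s) (hs1 : s < 1) :
    Summable (dyadicWeight s p) := by
  have hsp : 0 < s * p := mul_pos hs0 hp
  refine .of_nat_of_neg_add_one ?_ ?_
  · refine (summable_geometric_of_lt_one (by positivity)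
      (inv_lt_one_of_one_lt₀ (Real.one_lt_rpow one_lt_two hsp))).of_nonneg_of_le
      (fun n => dyadicWeight_nonneg s p n) fun n => ?_
    calc dyadicWeight s p n ≤ 1 / ((2 : ℝ) ^ n) ^ (s * p) := by
          rw [dyadicWeight, zpow_natCast]
          gcongr
          exact Real.rpow_le_one (by positivity) (min_le_left _ _) hp.le
      _ = ((2 ^ (s * p))⁻¹) ^ n := by
          rw [one_div, ← Real.rpow_pow_comm zero_le_two, inv_pow]
  · refine ((summable_geometric_of_lt_one (by positivity)
      (Real.rpow_lt_one_of_one_lt_of_neg one_lt_two (by nlinarith : s * p - p < 0))).mul_left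
        ((2 : ℝ) ^ (s * p))).of_nonneg_of_le (fun n => dyadicWeight_nonneg s p _) fun n => ?_
    have h2n : (2 : ℝ) ^ (-((n : ℤ) + 1)) = ((2 : ℝ) ^ n)⁻¹ / 2 := by
      rw [zpow_neg, ← Nat.cast_succ, zpow_natCast, pow_succ, mul_inv, div_eq_mul_inv]
    calc dyadicWeight s p (-((n : ℤ) + 1))
        ≤ (((2 : ℝ) ^ n)⁻¹) ^ p / (((2 : ℝ) ^ n)⁻¹ / 2) ^ (s * p) := by
          rw [dyadicWeight, h2n]
          gcongr
          exact (min_le_right _ _).trans_eq (by ring)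
      _ = 2 ^ (s * p) * (2 ^ (s * p - p)) ^ n := by
          rw [Real.div_rpow (by positivity) zero_le_two, Real.inv_rpow (by positivity),
            Real.inv_rpow (by positivity), Real.rpow_sub zero_lt_two,
            ← Real.rpow_pow_comm zero_le_two, ← Real.rpow_pow_comm zero_le_two, div_pow]
          field_simp

theorem lintegral_lintegral_le_of_eq_zero_off {α : Type*} [MeasurableSpace α] {ν : Measure α}
    [SFinite ν] {F : α → α → ℝ≥0∞} (hF : Measurable (Function.uncurry F)) {G : Set α}
    (hG : MeasurableSet G) (hF0 : ∀ x y, x ∉ G → y ∉ G → F x y = 0) {A B : ℝ≥0∞}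
    (hA : ∀ x, ∫⁻ y, F x y ∂ν ≤ A) (hB : ∀ y, ∫⁻ x, F x y ∂ν ≤ B) :
    ∫⁻ x, ∫⁻ y, F x y ∂ν ∂ν ≤ (A + B) * ν G := by
  have hsplit : ∀ x, ∫⁻ y, F x y ∂ν ≤
      G.indicator (fun x => ∫⁻ y, F x y ∂ν) x + ∫⁻ y, G.indicator (F x) y ∂ν := by
    intro x
    by_cases hx : x ∈ G
    · simp [hx]
    rw [indicator_of_notMem hx, zero_add]
    exact lintegral_mono fun y => by by_cases hy : y ∈ G <;> simp [hy, hF0 x y hx]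
  have hswap : ∫⁻ x, ∫⁻ y, G.indicator (F x) y ∂ν ∂ν =
      ∫⁻ y, G.indicator (fun y => ∫⁻ x, F x y ∂ν) y ∂ν := by
    have hmeas : Measurable (Function.uncurry fun x y => G.indicator (F x) y) :=
      hF.indicator (measurable_snd hG)
    rw [lintegral_lintegral_swap hmeas.aemeasurable]
    congr 1 with y
    by_cases hy : y ∈ G <;> simp [hy]
  calc ∫⁻ x, ∫⁻ y, F x y ∂ν ∂ν
      ≤ ∫⁻ x, (G.indicator (fun x => ∫⁻ y, F x y ∂ν) x + ∫⁻ y, G.indicator (F x) y ∂ν) ∂ν :=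
        lintegral_mono hsplit
    _ = ∫⁻ x in G, ∫⁻ y, F x y ∂ν ∂ν + ∫⁻ y in G, ∫⁻ x, F x y ∂ν ∂ν := by
        have hrow : Measurable fun x => ∫⁻ y, F x y ∂ν := hF.lintegral_prod_right'
        rw [lintegral_add_left (hrow.indicator hG), hswap,
          lintegral_indicator hG, lintegral_indicator hG]
    _ ≤ ∫⁻ _ in G, A ∂ν + ∫⁻ _ in G, B ∂ν := by gcongr with x y <;> [exact hA x; exact hB y]
    _ = (A + B) * ν G := by rw [setLIntegral_const, setLIntegral_const, add_mul]

section Kernels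

variable {X : Type*} [MetricSpace X] [MeasurableSpace X] {μ : Measure X} {s p L : ℝ}

theorem measurable_fracKernel [OpensMeasurableSpace X] [SecondCountableTopology X]
    (μ : Measure X) (s p : ℝ) {u : X → ℝ} (hu : Measurable u) :
    Measurable (Function.uncurry (fracKernel μ s p u)) :=
  (ENNReal.measurable_ofReal.comp
      (((hu.comp measurable_fst).sub (hu.comp measurable_snd)).abs.pow_const p)).div
    ((ENNReal.measurable_ofReal.comp (measurable_dist.pow_const _)).mul
      ((lowerSemicontinuous_measure_ball μ).measurable.comp
        (measurable_fst.prodMk measurable_dist)))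

theorem fracKernel_eq_zero (hp : p ≠ 0) {u : X → ℝ} {x y : X} (h : u x = u y) :
    fracKernel μ s p u x y = 0 := by
  simp [fracKernel, h, Real.zero_rpow hp]

noncomputable def cappedKernel (μ : Measure X) (s p L : ℝ) (x y : X) : ℝ≥0∞ :=
  ENNReal.ofReal (min 1 (L * dist x y) ^ p) /
    (ENNReal.ofReal (dist x y ^ (s * p)) * μ (ball x (dist x y)))

theorem fracKernel_le_cappedKernel (hp : 0 ≤ p) {u : X → ℝ} {x y : X}
    (h : |u x - u y| ≤ min 1 (L * dist x y)) :
    fracKernel μ s p u x y ≤ cappedKernel μ s p L x y :=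
  ENNReal.div_le_div_right (ENNReal.ofReal_le_ofReal (Real.rpow_le_rpow (abs_nonneg _) h hp)) _

theorem cappedKernel_self (hp : p ≠ 0) (x : X) : cappedKernel μ s p L x x = 0 := by
  simp [cappedKernel, Real.zero_rpow hp]

theorem cappedKernel_le_mul_cappedKernel_swap {c : ℝ≥0∞} (hc0 : c ≠ 0) (hctop : c ≠ ⊤)
    (hdoubling : ∀ x ρ, 0 < ρ → μ (ball x (2 * ρ)) ≤ c * μ (ball x ρ)) (x y : X) :
    cappedKernel μ s p L x y ≤ c * cappedKernel μ s p L y x := by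
  have hμ : μ (ball y (dist x y)) ≤ c * μ (ball x (dist x y)) := by
    rcases (dist_nonneg (x := x) (y := y)).eq_or_lt with hd | hd
    · simp [← hd]
    · have hsub : ball y (dist x y) ⊆ ball x (2 * dist x y) :=
        ball_subset_ball' (by linarith [dist_comm x y])
      exact (measure_mono hsub).trans (hdoubling x _ hd)
  have hinv : c⁻¹ * μ (ball y (dist x y)) ≤ μ (ball x (dist x y)) := by
    calc c⁻¹ * μ (ball y (dist x y)) ≤ c⁻¹ * (c * μ (ball x (dist x y))) := by gcongr
      _ = μ (ball x (dist x y)) := by rw [← mul_assoc, ENNReal.inv_mul_cancel hc0 hctop, one_mul]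
  rw [cappedKernel, cappedKernel, dist_comm y x, div_eq_mul_inv, div_eq_mul_inv, mul_left_comm]
  gcongr
  rw [← inv_inv c, ← ENNReal.mul_inv (Or.inl (ENNReal.inv_ne_zero.2 hctop))
    (Or.inl (ENNReal.inv_ne_top.2 hc0)), ENNReal.inv_le_inv, mul_left_comm]
  gcongr

theorem setLIntegral_annulus_le [OpensMeasurableSpace X] {c M : ℝ≥0∞} {a : X} {t : ℝ}
    (h0 : μ (ball a t) ≠ 0) (htop : μ (ball a t) ≠ ⊤)
    (hdoubling : μ (ball a (2 * t)) ≤ c * μ (ball a t))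
    {g : X → ℝ≥0∞} (hg : ∀ y ∈ ball a (2 * t) \ ball a t, g y ≤ M / μ (ball a t)) :
    ∫⁻ y in ball a (2 * t) \ ball a t, g y ∂μ ≤ c * M :=
  calc ∫⁻ y in ball a (2 * t) \ ball a t, g y ∂μ
      ≤ ∫⁻ _ in ball a (2 * t) \ ball a t, M / μ (ball a t) ∂μ :=
        setLIntegral_mono' (measurableSet_ball.diff measurableSet_ball) hg
    _ = M / μ (ball a t) * μ (ball a (2 * t) \ ball a t) := setLIntegral_const _ _
    _ ≤ M / μ (ball a t) * (c * μ (ball a t)) := by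
        gcongr
        exact (measure_mono sdiff_subset).trans hdoubling
    _ = c * M := by rw [mul_left_comm, ENNReal.div_mul_cancel h0 htop]

theorem cappedKernel_le_of_mem_annulus (hL : 0 < L) (hp : 0 ≤ p) (hsp : 0 ≤ s * p) {a y : X}
    {j : ℤ} (hy : y ∈ ball a (2 * (2 ^ j / L)) \ ball a (2 ^ j / L)) :
    cappedKernel μ s p L a y ≤
      ENNReal.ofReal (dyadicWeight s p j * L ^ (s * p)) / μ (ball a (2 ^ j / L)) := by
  set t : ℝ := 2 ^ j / L
  have ht : 0 < t := by positivity
  obtain ⟨hy2, hy1⟩ := hy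
  rw [mem_ball, dist_comm] at hy2 hy1
  rw [not_lt] at hy1
  have hnum : min 1 (L * dist a y) ^ p ≤ min 1 (2 * 2 ^ j) ^ p := by
    refine Real.rpow_le_rpow (by positivity) (min_le_min_left 1 ?_) hp
    calc L * dist a y ≤ L * (2 * t) := by gcongr
      _ = 2 * 2 ^ j := by simp only [t]; field_simp
  have htsp : 0 < t ^ (s * p) := Real.rpow_pos_of_pos ht _
  have hweight : dyadicWeight s p j * L ^ (s * p) = min 1 (2 * 2 ^ j) ^ p / t ^ (s * p) := by
    rw [dyadicWeight, Real.div_rpow (by positivity) hL.le, div_div_eq_mul_div, mul_div_right_comm]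
  calc cappedKernel μ s p L a y
      ≤ ENNReal.ofReal (min 1 (2 * 2 ^ j) ^ p) /
          (ENNReal.ofReal (t ^ (s * p)) * μ (ball a t)) := by
        refine ENNReal.div_le_div (ENNReal.ofReal_le_ofReal hnum) ?_
        gcongr
    _ = ENNReal.ofReal (dyadicWeight s p j * L ^ (s * p)) / μ (ball a t) := by
        rw [hweight, ENNReal.ofReal_div_of_pos htsp, div_eq_mul_inv, div_eq_mul_inv,
          div_eq_mul_inv, ENNReal.mul_inv (Or.inl (ENNReal.ofReal_pos.2 htsp).ne')
            (Or.inl ENNReal.ofReal_ne_top), mul_assoc]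

theorem lintegral_cappedKernel_le [OpensMeasurableSpace X] {c : ℝ≥0∞}
    (hball : ∀ x ρ, 0 < ρ → 0 < μ (ball x ρ) ∧ μ (ball x ρ) < ⊤)
    (hdoubling : ∀ x ρ, 0 < ρ → μ (ball x (2 * ρ)) ≤ c * μ (ball x ρ))
    (hp : 0 < p) (hsp : 0 ≤ s * p) (hL : 0 < L) (a : X) :
    ∫⁻ y, cappedKernel μ s p L a y ∂μ ≤
      c * (∑' j, ENNReal.ofReal (dyadicWeight s p j)) * ENNReal.ofReal (L ^ (s * p)) := by
  have hsupp : Function.support (cappedKernel μ s p L a) ⊆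
      ⋃ j : ℤ, ball a (2 * (2 ^ j / L)) \ ball a (2 ^ j / L) := by
    intro y hy
    rcases eq_or_ne y a with rfl | hne
    · exact absurd (cappedKernel_self hp.ne' y) hy
    · exact mem_iUnion.2 (exists_mem_annulus_zpow hL hne)
  calc ∫⁻ y, cappedKernel μ s p L a y ∂μ
      = ∫⁻ y in ⋃ j : ℤ, ball a (2 * (2 ^ j / L)) \ ball a (2 ^ j / L),
          cappedKernel μ s p L a y ∂μ := (setLIntegral_eq_of_support_subset hsupp).symm
    _ ≤ ∑' j : ℤ, ∫⁻ y in ball a (2 * (2 ^ j / L)) \ ball a (2 ^ j / L),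
          cappedKernel μ s p L a y ∂μ := lintegral_iUnion_le _ _
    _ ≤ ∑' j : ℤ, c * ENNReal.ofReal (dyadicWeight s p j * L ^ (s * p)) := by
        refine ENNReal.tsum_le_tsum fun j => ?_
        have ht : 0 < (2 : ℝ) ^ j / L := by positivity
        exact setLIntegral_annulus_le (hball a _ ht).1.ne' (hball a _ ht).2.ne
          (hdoubling a _ ht) fun y hy => cappedKernel_le_of_mem_annulus hL hp.le hsp hy
    _ = c * (∑' j, ENNReal.ofReal (dyadicWeight s p j)) * ENNReal.ofReal (L ^ (s * p)) := by
        simp_rw [ENNReal.ofReal_mul (dyadicWeight_nonneg s p _), ← mul_assoc,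
          ENNReal.tsum_mul_right, ENNReal.tsum_mul_left]

theorem lintegral_lintegral_fracKernel_le [OpensMeasurableSpace X] [SecondCountableTopology X]
    [SFinite μ] {c : ℝ≥0∞} (hc0 : c ≠ 0) (hctop : c ≠ ⊤)
    (hball : ∀ x ρ, 0 < ρ → 0 < μ (ball x ρ) ∧ μ (ball x ρ) < ⊤)
    (hdoubling : ∀ x ρ, 0 < ρ → μ (ball x (2 * ρ)) ≤ c * μ (ball x ρ))
    (hp : 0 < p) (hsp : 0 ≤ s * p) (hL : 0 < L) {u : X → ℝ} (hu : Measurable u)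
    (hlip : ∀ x y, |u x - u y| ≤ min 1 (L * dist x y)) {G : Set X} (hG : MeasurableSet G)
    (hconst : ∀ x y, x ∉ G → y ∉ G → u x = u y) (B : Set X) :
    ∫⁻ x in B, ∫⁻ y in B, fracKernel μ s p u x y ∂μ ∂μ ≤
      (1 + c) * (c * (∑' j, ENNReal.ofReal (dyadicWeight s p j)) *
        ENNReal.ofReal (L ^ (s * p))) * μ (G ∩ B) := by
  set A := c * (∑' j, ENNReal.ofReal (dyadicWeight s p j)) * ENNReal.ofReal (L ^ (s * p))
  have hcapped : ∀ x y, fracKernel μ s p u x y ≤ cappedKernel μ s p L x y := fun x y =>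
    fracKernel_le_cappedKernel hp.le (hlip x y)
  have hrow : ∀ x, ∫⁻ y, cappedKernel μ s p L x y ∂μ ≤ A :=
    lintegral_cappedKernel_le hball hdoubling hp hsp hL
  have hcol : ∀ y, ∫⁻ x, cappedKernel μ s p L x y ∂μ ≤ c * A := fun y =>
    calc ∫⁻ x, cappedKernel μ s p L x y ∂μ ≤ ∫⁻ x, c * cappedKernel μ s p L y x ∂μ :=
          lintegral_mono fun x => cappedKernel_le_mul_cappedKernel_swap hc0 hctop hdoubling x y
      _ ≤ c * A := by
          rw [lintegral_const_mul' _ _ hctop]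
          exact mul_le_mul_right (hrow y) c
  calc ∫⁻ x in B, ∫⁻ y in B, fracKernel μ s p u x y ∂μ ∂μ
      ≤ (A + c * A) * μ.restrict B G :=
        lintegral_lintegral_le_of_eq_zero_off (measurable_fracKernel μ s p hu) hG
          (fun x y hx hy => fracKernel_eq_zero hp.ne' (hconst x y hx hy))
          (fun x => (setLIntegral_le_lintegral _ _).trans
            ((lintegral_mono (hcapped x)).trans (hrow x)))
          (fun y => (setLIntegral_le_lintegral _ _).trans
            ((lintegral_mono fun x => hcapped x y).trans (hcol y)))
    _ = (1 + c) * A * μ (G ∩ B) := by rw [Measure.restrict_apply hG]; ring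

end Kernels

theorem test_function_energy_estimate_general {X : Type*} [MetricSpace X] [MeasurableSpace X]
    [BorelSpace X]
    (μ : Measure X) (c_μ : ℝ) (hc : 1 < c_μ)
    (hball : ∀ (x : X) (ρ : ℝ), 0 < ρ → 0 < μ (ball x ρ) ∧ μ (ball x ρ) < ⊤)
    (hdoubling : ∀ (x : X) (ρ : ℝ), 0 < ρ →
      μ (ball x (2 * ρ)) ≤ ENNReal.ofReal c_μ * μ (ball x ρ))
    (p s : ℝ) (hp : 1 < p) (hs0 : 0 < s) (hs1 : s < 1)
    (E : Set X) :
    ∃ C : ℝ, 0 < C ∧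
      ∀ z ∈ E, ∀ r R : ℝ, 0 < r → r < R → ENNReal.ofReal R < diamBound E →
        (∫⁻ x in ball z R, ∫⁻ y in ball z R,
            fracKernel μ s p (fun w => min 1 (4 * r⁻¹ * infDist w E)) x y ∂μ ∂μ) ≤
          ENNReal.ofReal (C * r ^ (-(s * p))) * μ ({x | infDist x E < r} ∩ ball z R) := by
  have hp0 : 0 < p := zero_lt_one.trans hp
  have hc0 : 0 < c_μ := zero_lt_one.trans hc
  have hsum := summable_dyadicWeight hp0 hs0 hs1
  have hK : 0 < ∑' j, dyadicWeight s p j :=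
    hsum.tsum_pos (dyadicWeight_nonneg s p) 0 (by norm_num [dyadicWeight])
  refine ⟨(1 + c_μ) * (c_μ * (∑' j, dyadicWeight s p j) * 4 ^ (s * p)), by positivity, ?_⟩
  rintro z - r R hr - -
  have : Nonempty X := ⟨z⟩
  have := sigmaFinite_of_measure_ball_lt_top μ fun x ρ hρ => (hball x ρ hρ).2
  have := secondCountableTopology_of_measure_ball_pos μ fun x ρ hρ => (hball x ρ hρ).1
  have hL : 0 < 4 * r⁻¹ := by positivity
  have hfar : ∀ x ∉ {x | infDist x E < r}, min 1 (4 * r⁻¹ * infDist x E) = 1 := fun x hx =>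
    min_eq_left <| calc (1 : ℝ) ≤ 4 * r⁻¹ * r := by field_simp; norm_num
      _ ≤ 4 * r⁻¹ * infDist x E := by gcongr; exact not_lt.1 hx
  refine (lintegral_lintegral_fracKernel_le (ENNReal.ofReal_pos.2 hc0).ne' ENNReal.ofReal_ne_top
    hball hdoubling hp0 (mul_pos hs0 hp0).le hL
    ((continuous_const.min (continuous_const.mul (continuous_infDist_pt E))).measurable)
    (abs_min_one_infDist_sub_le hL.le E)
    (G := {x | infDist x E < r}) ((continuous_infDist_pt E).measurable measurableSet_Iio)
    (fun x y hx hy => (hfar x hx).trans (hfar y hy).symm) _).trans_eq ?_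
  rw [← ENNReal.ofReal_tsum_of_nonneg (dyadicWeight_nonneg s p) hsum, ← ENNReal.ofReal_one,
    ← ENNReal.ofReal_add zero_le_one hc0.le, ← ENNReal.ofReal_mul hc0.le,
    ← ENNReal.ofReal_mul (by positivity), ← ENNReal.ofReal_mul (by positivity),
    Real.mul_rpow zero_le_four (inv_nonneg.2 hr.le), Real.inv_rpow hr.le, Real.rpow_neg hr.le]
  congr 2
  ring

/-- Energy estimate for the test function `u(x) = min{1, 4 r⁻¹ dist(x,E)}`: the Gagliardo
`(s,p)`-energy of `u` over `B(z,R)` is bounded by `C r^{-sp} μ(E_r ∩ B(z,R))`, with `C`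
independent of `z`, `r` and `R`. -/
theorem test_function_energy_estimate {X : Type*} [MetricSpace X] [MeasurableSpace X]
    [BorelSpace X] [Nontrivial X]
    (μ : Measure X) (c_μ : ℝ) (hc : 1 < c_μ)
    (hball : ∀ (x : X) (ρ : ℝ), 0 < ρ → 0 < μ (ball x ρ) ∧ μ (ball x ρ) < ⊤)
    (hdoubling : ∀ (x : X) (ρ : ℝ), 0 < ρ →
      μ (ball x (2 * ρ)) ≤ ENNReal.ofReal c_μ * μ (ball x ρ))
    (p s : ℝ) (hp : 1 < p) (hs0 : 0 < s) (hs1 : s < 1)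
    (E : Set X) (hE : E.Nonempty) :
    ∃ C : ℝ, 0 < C ∧
      ∀ z ∈ E, ∀ r R : ℝ, 0 < r → r < R → ENNReal.ofReal R < diamBound E →
        (∫⁻ x in ball z R, ∫⁻ y in ball z R,
            fracKernel μ s p (fun w => min 1 (4 * r⁻¹ * infDist w E)) x y ∂μ ∂μ) ≤
          ENNReal.ofReal (C * r ^ (-(s * p))) * μ ({x | infDist x E < r} ∩ ball z R) :=
  test_function_energy_estimate_general μ c_μ hc hball hdoubling p s hp hs0 hs1 E
end
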